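/- arXiv:2008.09008 — 4 statements merged into one kernel-verified Lean document; each statement's English description precedes it below -/
import Mathlib

section
/- The independence number of the graph X obtained from the icosahedron by deleting one edge {a,b} equals 4, and every maximum independent set of X contains both endpoints a and b of the deleted edge. -/
/-- Edge list of the icosahedron on 12 vertices: apex 0, upper 5-ring 1–5,
lower 5-ring 6–10, bottom apex 11. -/
def icoList : List (Fin 12 × Fin 12) :=
  [(0,1),(0,2),(0,3),(0,4),(0,5),
   (1,2),(2,3),(3,4),(4,5),(5,1),
   (1,6),(1,7),(2,7),(2,8),(3,8),(3,9),(4,9),(4,10),(5,10),(5,6),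
   (6,7),(7,8),(8,9),(9,10),(10,6),
   (11,6),(11,7),(11,8),(11,9),(11,10)]

/-- The icosahedron graph (the 5-regular planar graph on 12 vertices). -/
def Ico : SimpleGraph (Fin 12) where
  Adj x y := (x, y) ∈ icoList ∨ (y, x) ∈ icoList
  symm := ⟨fun _ _ h => h.symm.imp id id⟩
  loopless := ⟨by intro x; revert x; decide⟩

instance : DecidableRel Ico.Adj := fun x y =>
  inferInstanceAs (Decidable (_ ∨ _))

/-- `0` and `1` are the endpoints of the deleted edge `{a,b}`:
the icosahedron minus the edge `{0,1}`. -/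
def X : SimpleGraph (Fin 12) where
  Adj x y := Ico.Adj x y ∧ ¬(x = 0 ∧ y = 1) ∧ ¬(x = 1 ∧ y = 0)
  symm := ⟨fun _ _ h => ⟨h.1.symm, fun c => h.2.2 ⟨c.2, c.1⟩, fun c => h.2.1 ⟨c.2, c.1⟩⟩⟩
  loopless := ⟨fun x h => Ico.loopless.irrefl x h.1⟩

instance : DecidableRel X.Adj := fun _ _ =>
  inferInstanceAs (Decidable (_ ∧ _))

/-- `s` is an independent set of `G`: its vertices are pairwise nonadjacent. -/
def IsIndepF {V : Type*} (G : SimpleGraph V) (s : Finset V) : Prop :=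
  ∀ ⦃a⦄, a ∈ s → ∀ ⦃b⦄, b ∈ s → a ≠ b → ¬ G.Adj a b

/-- The independence number of `G`. -/
noncomputable def alphaN {V : Type*} [Fintype V] (G : SimpleGraph V) : ℕ :=
  sSup {n | ∃ s : Finset V, IsIndepF G s ∧ s.card = n}

/-!
An independent set of `X` that does not contain both `0` and `1` is independent in the
icosahedron. The icosahedron is covered by the four triangles `{0,1,2}`, `{3,4,9}`, `{5,6,10}`,
`{7,8,11}`, each meeting an independent set at most once, and no choice of one vertex per triangle
is independent; so such a set has at most three vertices. An independent set containing `0` and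
`1` avoids their neighbours `2, …, 7`, and the remaining vertices are covered by the edges
`{8,11}` and `{9,10}`; so it has at most four vertices, and `{0,1,8,10}` has four.
-/

open Finset

section IndependentSets

variable {V : Type*} {G : SimpleGraph V} {s : Finset V}

instance [DecidableEq V] [DecidableRel G.Adj] : Decidable (IsIndepF G s) := by
  unfold IsIndepF; infer_instance

theorem IsIndepF.not_adj (hs : IsIndepF G s) {a b : V} (ha : a ∈ s) (hb : b ∈ s) :
    ¬G.Adj a b :=
  fun h => hs ha hb (G.ne_of_adj h) h

theorem IsIndepF.card_inter_le_one [DecidableEq V] (hs : IsIndepF G s) {t : Finset V}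
    (ht : G.IsClique (t : Set V)) : #(s ∩ t) ≤ 1 := by
  refine card_le_one.mpr fun a ha b hb => by_contra fun hab => ?_
  rw [mem_inter] at ha hb
  exact hs ha.1 hb.1 hab (ht ha.2 hb.2 hab)

theorem IsIndepF.card_le_card_filter_meets [DecidableEq V] {ι : Type*} (hs : IsIndepF G s)
    {I : Finset ι} {t : ι → Finset V} (ht : ∀ i ∈ I, G.IsClique (t i : Set V))
    (hcover : ∀ v ∈ s, ∃ i ∈ I, v ∈ t i) : #s ≤ #{i ∈ I | (s ∩ t i).Nonempty} := by
  have hsub : s ⊆ {i ∈ I | (s ∩ t i).Nonempty}.biUnion (fun i => s ∩ t i) := by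
    intro v hv
    obtain ⟨i, hi, hvi⟩ := hcover v hv
    exact mem_biUnion.mpr ⟨i, mem_filter.mpr ⟨hi, v, mem_inter.mpr ⟨hv, hvi⟩⟩,
      mem_inter.mpr ⟨hv, hvi⟩⟩
  calc #s ≤ #({i ∈ I | (s ∩ t i).Nonempty}.biUnion (fun i => s ∩ t i)) := card_le_card hsub
    _ ≤ #{i ∈ I | (s ∩ t i).Nonempty} * 1 :=
      card_biUnion_le_card_mul _ _ _ fun i hi => hs.card_inter_le_one (ht i (mem_filter.mp hi).1)
    _ = #{i ∈ I | (s ∩ t i).Nonempty} := mul_one _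

theorem IsIndepF.card_le_of_forall_exists_mem [DecidableEq V] {ι : Type*} (hs : IsIndepF G s)
    {I : Finset ι} {t : ι → Finset V} (ht : ∀ i ∈ I, G.IsClique (t i : Set V))
    (hcover : ∀ v ∈ s, ∃ i ∈ I, v ∈ t i) : #s ≤ #I :=
  (hs.card_le_card_filter_meets ht hcover).trans (card_filter_le _ _)

theorem alphaN_eq_of_forall_card_le [Fintype V] {n : ℕ}
    (hle : ∀ s, IsIndepF G s → #s ≤ n) (hex : ∃ s, IsIndepF G s ∧ #s = n) : alphaN G = n := by
  have hbdd : n ∈ upperBounds {m | ∃ s : Finset V, IsIndepF G s ∧ #s = m} := by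
    rintro _ ⟨s, hs, rfl⟩
    exact hle s hs
  exact le_antisymm (csSup_le ⟨n, hex⟩ hbdd) (le_csSup ⟨n, hbdd⟩ hex)

end IndependentSets

def icoTriangle : Fin 4 → Finset (Fin 12) := ![{0, 1, 2}, {3, 4, 9}, {5, 6, 10}, {7, 8, 11}]

theorem isClique_icoTriangle (i : Fin 4) : Ico.IsClique (icoTriangle i : Set (Fin 12)) := by
  have h : ∀ i, ∀ a ∈ icoTriangle i, ∀ b ∈ icoTriangle i, a ≠ b → Ico.Adj a b := by decide
  exact fun a ha b hb => h i a ha b hb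

theorem exists_mem_icoTriangle : ∀ v : Fin 12, ∃ i, v ∈ icoTriangle i := by decide

theorem Ico_adj_of_mem_icoTriangle :
    ∀ a ∈ icoTriangle 0, ∀ b ∈ icoTriangle 1, ∀ c ∈ icoTriangle 2, ∀ d ∈ icoTriangle 3,
      Ico.Adj a b ∨ Ico.Adj a c ∨ Ico.Adj a d ∨ Ico.Adj b c ∨ Ico.Adj b d ∨ Ico.Adj c d := by
  decide

theorem IsIndepF.not_forall_meets_icoTriangle {s : Finset (Fin 12)} (hs : IsIndepF Ico s) :
    ¬∀ i, (s ∩ icoTriangle i).Nonempty := by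
  intro hmeets
  choose v hv using hmeets
  simp only [mem_inter] at hv
  rcases Ico_adj_of_mem_icoTriangle _ (hv 0).2 _ (hv 1).2 _ (hv 2).2 _ (hv 3).2
    with h | h | h | h | h | h
  all_goals exact hs.not_adj (hv _).1 (hv _).1 h

theorem IsIndepF.card_le_three_of_Ico {s : Finset (Fin 12)} (hs : IsIndepF Ico s) : #s ≤ 3 := by
  have hbound := hs.card_le_card_filter_meets (I := univ) (fun i _ => isClique_icoTriangle i)
    fun v _ => (exists_mem_icoTriangle v).imp fun i hi => ⟨mem_univ i, hi⟩
  obtain ⟨i, hi⟩ := not_forall.mp hs.not_forall_meets_icoTriangle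
  have hmissing : ({i | (s ∩ icoTriangle i).Nonempty} : Finset (Fin 4)) ⊂ univ :=
    filter_ssubset.mpr ⟨i, mem_univ i, hi⟩
  have hlt := card_lt_card hmissing
  rw [card_univ, Fintype.card_fin] at hlt
  omega

theorem IsIndepF.Ico_of_X {s : Finset (Fin 12)} (hs : IsIndepF X s) (h01 : ¬(0 ∈ s ∧ 1 ∈ s)) :
    IsIndepF Ico s := by
  intro a ha b hb hab hadj
  refine hs ha hb hab ⟨hadj, ?_, ?_⟩ <;> rintro ⟨rfl, rfl⟩
  exacts [h01 ⟨ha, hb⟩, h01 ⟨hb, ha⟩]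

/-- Cliques of `X` covering `0`, `1` and every vertex adjacent to neither of them. -/
def commonNonNeighborCliques : Fin 4 → Finset (Fin 12) := ![{0}, {1}, {8, 11}, {9, 10}]

theorem isClique_commonNonNeighborCliques (i : Fin 4) :
    X.IsClique (commonNonNeighborCliques i : Set (Fin 12)) := by
  have h : ∀ i, ∀ a ∈ commonNonNeighborCliques i, ∀ b ∈ commonNonNeighborCliques i,
      a ≠ b → X.Adj a b := by decide
  exact fun a ha b hb => h i a ha b hb

theorem exists_mem_commonNonNeighborCliques_or_adj :
    ∀ v : Fin 12, (∃ i, v ∈ commonNonNeighborCliques i) ∨ X.Adj 0 v ∨ X.Adj 1 v := by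
  decide

theorem IsIndepF.card_le_four_of_zero_mem_of_one_mem {s : Finset (Fin 12)} (hs : IsIndepF X s)
    (h0 : 0 ∈ s) (h1 : 1 ∈ s) : #s ≤ 4 := by
  refine hs.card_le_of_forall_exists_mem (I := univ)
    (fun i _ => isClique_commonNonNeighborCliques i) fun v hv => ?_
  rcases exists_mem_commonNonNeighborCliques_or_adj v with ⟨i, hi⟩ | h | h
  exacts [⟨i, mem_univ i, hi⟩, (hs.not_adj h0 hv h).elim, (hs.not_adj h1 hv h).elim]

theorem IsIndepF.card_le_four_of_X {s : Finset (Fin 12)} (hs : IsIndepF X s) : #s ≤ 4 := by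
  by_cases h01 : 0 ∈ s ∧ 1 ∈ s
  · exact hs.card_le_four_of_zero_mem_of_one_mem h01.1 h01.2
  · exact (hs.Ico_of_X h01).card_le_three_of_Ico.trans (by norm_num)

/-- the independence number of `X` (icosahedron minus the edge `{0,1}`)
equals 4, and every maximum independent set of `X` contains both `0` and `1`. -/
theorem icosahedron_minus_edge_indepNum_and_max_indep_sets :
    alphaN X = 4 ∧
    ∀ s : Finset (Fin 12), IsIndepF X s → s.card = alphaN X →
      (0 : Fin 12) ∈ s ∧ (1 : Fin 12) ∈ s := by
  have hα : alphaN X = 4 :=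
    alphaN_eq_of_forall_card_le (fun _ hs => hs.card_le_four_of_X) ⟨{0, 1, 8, 10}, by decide, rfl⟩
  refine ⟨hα, fun s hs hcard => by_contra fun h01 => ?_⟩
  have := (hs.Ico_of_X h01).card_le_three_of_Ico
  omega
end

section
/- In the gadget graph H for odd Δ ≥ 3, every maximum independent set contains, for each index i, one entire part (A_i or B_i) of the i-th complete bipartite subgraph. -/
/-- Vertices of the gadget graph with `k` complete bipartite blocks whose parts
`A i`, `B i` have size `m`, apex vertices `a i`, `b i`, and a hub vertex. -/
inductive GadgetV (k m : ℕ) where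
  | A (i : Fin k) (j : Fin m)
  | B (i : Fin k) (j : Fin m)
  | a (i : Fin k)
  | b (i : Fin k)
  | hub
  deriving DecidableEq, Fintype

/-- Base (asymmetric) adjacency: all pairs between `A i` and `B i`, `a i` to all of
`A i`, `b i` to all of `B i`, and the hub to every `a i` and `b i`. -/
def gRel {k m : ℕ} : GadgetV k m → GadgetV k m → Bool
  | .A i _, .B i' _ => i = i'
  | .a i, .A i' _ => i = i'
  | .b i, .B i' _ => i = i'
  | .hub, .a _ => true
  | .hub, .b _ => true
  | _, _ => false

/-- The gadget graph. -/
def Gadget (k m : ℕ) : SimpleGraph (GadgetV k m) where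
  Adj x y := x ≠ y ∧ (gRel x y ∨ gRel y x)
  symm := ⟨fun _ _ h => ⟨h.1.symm, h.2.symm⟩⟩
  loopless := ⟨fun _ h => h.1 rfl⟩

instance {k m : ℕ} : DecidableRel (Gadget k m).Adj := fun _ _ =>
  inferInstanceAs (Decidable (_ ∧ _))

/-!
Fix a block `i` and let `R` be the block together with the hub. For any independent `s`, the set
`(s \ R) ∪ A i ∪ {b i}` is again independent, because every neighbour of `A i ∪ {b i}` lies in `R`;
so a maximum independent set has at least `m + 1` vertices in `R`. On the other hand, if `s` misses
a vertex of `A i` and a vertex of `B i`, it has at most `m` vertices in `R`: it meets at most one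
of `A i`, `B i`, in fewer than `m` vertices; meeting `A i` (say) excludes `a i` and leaves at most
one of the adjacent pair `b i`, `hub`, while meeting neither leaves at most two of `a i`, `hub`,
`b i`, and `2 ≤ m`.
-/

namespace IsIndepF

open Finset

variable {V : Type*} {G : SimpleGraph V} [DecidableEq V] {s t U X Y : Finset V}

theorem sdiff_union (hs : IsIndepF G s) (ht : IsIndepF G t)
    (hnbr : ∀ x ∈ t, ∀ y, G.Adj x y → y ∈ U) : IsIndepF G (s \ U ∪ t) := by
  intro x hx y hy hxy hadj
  simp only [mem_union, mem_sdiff] at hx hy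
  rcases hx with ⟨hxs, hxU⟩ | hxt <;> rcases hy with ⟨hys, hyU⟩ | hyt
  · exact hs hxs hys hxy hadj
  · exact hxU (hnbr y hyt x hadj.symm)
  · exact hyU (hnbr x hxt y hadj)
  · exact ht hxt hyt hxy hadj

theorem card_le_card_inter_of_maximum (hs : IsIndepF G s)
    (hmax : ∀ t', IsIndepF G t' → #t' ≤ #s) (ht : IsIndepF G t) (htU : t ⊆ U)
    (hnbr : ∀ x ∈ t, ∀ y, G.Adj x y → y ∈ U) : #t ≤ #(s ∩ U) := by
  have hdisj : Disjoint (s \ U) t := disjoint_sdiff_self_left.mono_right htU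
  have := hmax _ (hs.sdiff_union ht hnbr)
  rw [card_union_of_disjoint hdisj] at this
  have := card_sdiff_add_card_inter s U
  omega

theorem card_inter_eq_zero_or_of_forall_adj (hs : IsIndepF G s) (hXY : ∀ x ∈ X, ∀ y ∈ Y, G.Adj x y) :
    #(s ∩ X) = 0 ∨ #(s ∩ Y) = 0 := by
  by_contra! h
  obtain ⟨x, hx⟩ := card_ne_zero.1 h.1
  obtain ⟨y, hy⟩ := card_ne_zero.1 h.2
  rw [mem_inter] at hx hy
  have hadj := hXY x hx.2 y hy.2
  exact hs hx.1 hy.1 hadj.ne hadj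

end IsIndepF

namespace Gadget

open Finset

variable {k m : ℕ}

def partA (i : Fin k) : Finset (GadgetV k m) :=
  univ.map ⟨GadgetV.A i, fun _ _ h => (GadgetV.A.inj h).2⟩

def partB (i : Fin k) : Finset (GadgetV k m) :=
  univ.map ⟨GadgetV.B i, fun _ _ h => (GadgetV.B.inj h).2⟩

def region (i : Fin k) : Finset (GadgetV k m) :=
  partA i ∪ partB i ∪ {.a i} ∪ {.b i} ∪ {.hub}

@[simp] theorem mem_partA {i : Fin k} {v : GadgetV k m} : v ∈ partA i ↔ ∃ j, .A i j = v := by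
  simp only [partA, mem_map, mem_univ, true_and]; rfl

@[simp] theorem mem_partB {i : Fin k} {v : GadgetV k m} : v ∈ partB i ↔ ∃ j, .B i j = v := by
  simp only [partB, mem_map, mem_univ, true_and]; rfl

theorem card_partA (i : Fin k) : #(partA i : Finset (GadgetV k m)) = m := by
  simp [partA]

theorem card_partB (i : Fin k) : #(partB i : Finset (GadgetV k m)) = m := by
  simp [partB]

theorem isIndepF_partA_union_b (i : Fin k) : IsIndepF (Gadget k m) (partA i ∪ {.b i}) := by
  intro x hx y hy _ hadj
  simp only [mem_union, mem_partA, mem_singleton] at hx hy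
  rcases hx with ⟨j, rfl⟩ | rfl <;> rcases hy with ⟨j', rfl⟩ | rfl <;>
    simp [Gadget, gRel] at hadj

theorem mem_region_of_adj {i : Fin k} {x y : GadgetV k m} (hx : x ∈ partA i ∪ {.b i})
    (hadj : (Gadget k m).Adj x y) : y ∈ region i := by
  simp only [mem_union, mem_partA, mem_singleton] at hx
  rcases hx with ⟨j, rfl⟩ | rfl <;> cases y <;> simp_all [Gadget, gRel, region]

theorem card_inter_region_le (hm : 2 ≤ m) {s : Finset (GadgetV k m)}
    (hs : IsIndepF (Gadget k m) s) {i : Fin k} {j₀ j₁ : Fin m}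
    (hA : .A i j₀ ∉ s) (hB : .B i j₁ ∉ s) : #(s ∩ region i) ≤ m := by
  have hsplit : #(s ∩ region i) ≤ #(s ∩ partA i) + #(s ∩ partB i) + #(s ∩ {.a i}) +
      #(s ∩ {.b i}) + #(s ∩ {.hub}) := by
    simp only [region, inter_union_distrib_left]
    grw [card_union_le, card_union_le, card_union_le, card_union_le]
  have hsA : #(s ∩ partA i) < m :=
    (card_lt_card ⟨inter_subset_right, fun h => hA (h (by simp) |> mem_inter.1).1⟩).trans_eq
      (card_partA i)
  have hsB : #(s ∩ partB i) < m :=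
    (card_lt_card ⟨inter_subset_right, fun h => hB (h (by simp) |> mem_inter.1).1⟩).trans_eq
      (card_partB i)
  have hsingle (v : GadgetV k m) : #(s ∩ {v}) ≤ 1 :=
    (card_le_card inter_subset_right).trans_eq (card_singleton v)
  have hAB := hs.card_inter_eq_zero_or_of_forall_adj (X := partA i) (Y := partB i) (by simp [Gadget, gRel])
  have hAa := hs.card_inter_eq_zero_or_of_forall_adj (X := partA i) (Y := {.a i}) (by simp [Gadget, gRel])
  have hBb := hs.card_inter_eq_zero_or_of_forall_adj (X := partB i) (Y := {.b i}) (by simp [Gadget, gRel])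
  have hha := hs.card_inter_eq_zero_or_of_forall_adj (X := {.hub}) (Y := {.a i}) (by simp [Gadget, gRel])
  have hhb := hs.card_inter_eq_zero_or_of_forall_adj (X := {.hub}) (Y := {.b i}) (by simp [Gadget, gRel])
  have := hsingle (.a i); have := hsingle (.b i); have := hsingle .hub
  omega

theorem forall_A_mem_or_forall_B_mem (hm : 2 ≤ m) {s : Finset (GadgetV k m)}
    (hs : IsIndepF (Gadget k m) s)
    (hmax : ∀ t, IsIndepF (Gadget k m) t → #t ≤ #s) (i : Fin k) :
    (∀ j, .A i j ∈ s) ∨ (∀ j, .B i j ∈ s) := by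
  by_contra! ⟨⟨j₀, hA⟩, ⟨j₁, hB⟩⟩
  have hlarge := hs.card_le_card_inter_of_maximum hmax (isIndepF_partA_union_b i)
    (by intro v; simp only [region, mem_union]; tauto)
    (fun x hx y hadj => mem_region_of_adj hx hadj)
  have : #(partA i ∪ {.b i} : Finset (GadgetV k m)) = m + 1 := by
    rw [card_union_of_disjoint (by simp), card_partA, card_singleton]
  have := card_inter_region_le hm hs hA hB
  omega

end Gadget

theorem gadget_max_indep_set_contains_a_full_part_general (Δ : ℕ) (h3 : 3 ≤ Δ)
    (s : Finset (GadgetV ((Δ - 1) / 2) (Δ - 1)))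
    (hind : IsIndepF (Gadget ((Δ - 1) / 2) (Δ - 1)) s)
    (hmax : ∀ t : Finset (GadgetV ((Δ - 1) / 2) (Δ - 1)),
      IsIndepF (Gadget ((Δ - 1) / 2) (Δ - 1)) t → t.card ≤ s.card) :
    ∀ i : Fin ((Δ - 1) / 2),
      (∀ j : Fin (Δ - 1), GadgetV.A i j ∈ s) ∨ (∀ j : Fin (Δ - 1), GadgetV.B i j ∈ s) :=
  Gadget.forall_A_mem_or_forall_B_mem (by omega) hind hmax

/-- for odd `Δ ≥ 3`, every maximum independent set of the gadget graph
contains, for each index `i`, one entire part (`A i` or `B i`) of the `i`-th complete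
bipartite subgraph. -/
theorem gadget_max_indep_set_contains_a_full_part (Δ : ℕ) (hodd : Odd Δ) (h3 : 3 ≤ Δ)
    (s : Finset (GadgetV ((Δ - 1) / 2) (Δ - 1)))
    (hind : IsIndepF (Gadget ((Δ - 1) / 2) (Δ - 1)) s)
    (hmax : ∀ t : Finset (GadgetV ((Δ - 1) / 2) (Δ - 1)),
      IsIndepF (Gadget ((Δ - 1) / 2) (Δ - 1)) t → t.card ≤ s.card) :
    ∀ i : Fin ((Δ - 1) / 2),
      (∀ j : Fin (Δ - 1), GadgetV.A i j ∈ s) ∨ (∀ j : Fin (Δ - 1), GadgetV.B i j ∈ s) :=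
  gadget_max_indep_set_contains_a_full_part_general Δ h3 s hind hmax
end

section
/- In the gadget graph H for odd Δ ≥ 3, every vertex other than the hub vertex h has degree exactly Δ, and h has degree exactly Δ - 1. -/
open Finset

lemma Finset.card_insert_univ_image {α β : Type*} [Fintype α] [DecidableEq β] {f : α → β}
    (hf : Function.Injective f) {x : β} (hx : ∀ a, f a ≠ x) :
    #(insert x (univ.image f)) = Fintype.card α + 1 := by
  rw [card_insert_of_notMem (by simpa using hx), card_image_of_injective _ hf, card_univ]

namespace Gadget

variable {k m : ℕ}

lemma neighborFinset_A (i : Fin k) (j : Fin m) :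
    (Gadget k m).neighborFinset (.A i j) = insert (.a i) (univ.image (.B i)) := by
  ext w
  rw [SimpleGraph.mem_neighborFinset]
  cases w <;> simp [Gadget, gRel]

lemma neighborFinset_B (i : Fin k) (j : Fin m) :
    (Gadget k m).neighborFinset (.B i j) = insert (.b i) (univ.image (.A i)) := by
  ext w
  rw [SimpleGraph.mem_neighborFinset]
  cases w <;> simp [Gadget, gRel, eq_comm (a := i)]

lemma neighborFinset_a (i : Fin k) :
    (Gadget k m).neighborFinset (.a i) = insert .hub (univ.image (.A i)) := by
  ext w
  rw [SimpleGraph.mem_neighborFinset]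
  cases w <;> simp [Gadget, gRel]

lemma neighborFinset_b (i : Fin k) :
    (Gadget k m).neighborFinset (.b i) = insert .hub (univ.image (.B i)) := by
  ext w
  rw [SimpleGraph.mem_neighborFinset]
  cases w <;> simp [Gadget, gRel]

lemma neighborFinset_hub :
    (Gadget k m).neighborFinset .hub = univ.image .a ∪ univ.image .b := by
  ext w
  rw [SimpleGraph.mem_neighborFinset]
  cases w <;> simp [Gadget, gRel]

lemma degree_A (i : Fin k) (j : Fin m) : (Gadget k m).degree (.A i j) = m + 1 := by
  rw [← SimpleGraph.card_neighborFinset_eq_degree, neighborFinset_A,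
    card_insert_univ_image (fun _ _ h => by injection h) (by simp), Fintype.card_fin]

lemma degree_B (i : Fin k) (j : Fin m) : (Gadget k m).degree (.B i j) = m + 1 := by
  rw [← SimpleGraph.card_neighborFinset_eq_degree, neighborFinset_B,
    card_insert_univ_image (fun _ _ h => by injection h) (by simp), Fintype.card_fin]

lemma degree_a (i : Fin k) : (Gadget k m).degree (.a i) = m + 1 := by
  rw [← SimpleGraph.card_neighborFinset_eq_degree, neighborFinset_a,
    card_insert_univ_image (fun _ _ h => by injection h) (by simp), Fintype.card_fin]

lemma degree_b (i : Fin k) : (Gadget k m).degree (.b i) = m + 1 := by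
  rw [← SimpleGraph.card_neighborFinset_eq_degree, neighborFinset_b,
    card_insert_univ_image (fun _ _ h => by injection h) (by simp), Fintype.card_fin]

lemma degree_hub : (Gadget k m).degree .hub = 2 * k := by
  rw [← SimpleGraph.card_neighborFinset_eq_degree, neighborFinset_hub,
    card_union_of_disjoint (by simp [disjoint_left]),
    card_image_of_injective _ (fun _ _ h => by injection h),
    card_image_of_injective _ (fun _ _ h => by injection h), card_univ, Fintype.card_fin]
  ring

lemma degree_of_ne_hub {v : GadgetV k m} (hv : v ≠ .hub) : (Gadget k m).degree v = m + 1 := by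
  cases v with
  | A i j => exact degree_A i j
  | B i j => exact degree_B i j
  | a i => exact degree_a i
  | b i => exact degree_b i
  | hub => exact absurd rfl hv

end Gadget

theorem gadget_degrees_general (Δ : ℕ) (hodd : Odd Δ) :
    (∀ v : GadgetV ((Δ - 1) / 2) (Δ - 1), v ≠ GadgetV.hub →
      (Gadget ((Δ - 1) / 2) (Δ - 1)).degree v = Δ) ∧
    (Gadget ((Δ - 1) / 2) (Δ - 1)).degree GadgetV.hub = Δ - 1 := by
  obtain ⟨t, rfl⟩ := hodd
  refine ⟨fun v hv => ?_, ?_⟩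
  · rw [Gadget.degree_of_ne_hub hv]
    omega
  · rw [Gadget.degree_hub]
    omega

/-- for odd `Δ ≥ 3`, every vertex of the gadget graph other than the hub
has degree exactly `Δ`, and the hub has degree exactly `Δ - 1`. -/
theorem gadget_degrees (Δ : ℕ) (hodd : Odd Δ) (h3 : 3 ≤ Δ) :
    (∀ v : GadgetV ((Δ - 1) / 2) (Δ - 1), v ≠ GadgetV.hub →
      (Gadget ((Δ - 1) / 2) (Δ - 1)).degree v = Δ) ∧
    (Gadget ((Δ - 1) / 2) (Δ - 1)).degree GadgetV.hub = Δ - 1 :=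
  gadget_degrees_general Δ hodd
end

section
/- Let G' be obtained from a graph G by attaching, for each vertex v of G, some number of pendant gadget graphs via edges to their hub vertices, where each gadget H satisfies: every maximum independent set of H avoids the hub, and α(H) = s. If m gadgets are attached in total, then α(G') = α(G) + m·s. -/
/-- `G'`: the graph obtained from `G` by attaching `m` disjoint copies of the gadget
`H`; the `i`-th copy is attached by a single edge joining its hub vertex `hub` to the
vertex `f i` of `G`. -/
def multiAttach {V W : Type*} (G : SimpleGraph V) (H : SimpleGraph W) (hub : W)
    (m : ℕ) (f : Fin m → V) : SimpleGraph (V ⊕ Fin m × W) where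
  Adj x y := match x, y with
    | Sum.inl u, Sum.inl v => G.Adj u v
    | Sum.inr (i, u), Sum.inr (j, v) => i = j ∧ H.Adj u v
    | Sum.inl u, Sum.inr (i, v) => u = f i ∧ v = hub
    | Sum.inr (i, v), Sum.inl u => u = f i ∧ v = hub
  symm := ⟨by
    rintro (u | ⟨i, u⟩) (v | ⟨j, v⟩) h
    · exact h.symm
    · exact h
    · exact h
    · exact ⟨h.1.symm, h.2.symm⟩⟩
  loopless := ⟨by
    rintro (u | ⟨i, u⟩) h
    · exact G.irrefl h
    · exact H.irrefl h.2⟩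

/-!
Restricting an independent set of `G'` to `G` and to each copy of `H` gives independent sets
there, so `α(G') ≤ α(G) + m s`. Conversely, the hub condition says that a maximum independent
set of `H` avoids the hub, so a maximum independent set of `G` together with one maximum
independent set of `H` in every copy spans no attaching edge, which gives `α(G') ≥ α(G) + m s`.
-/

open Finset SimpleGraph

lemma isIndepF_iff_isIndepSet {V : Type*} {G : SimpleGraph V} {s : Finset V} :
    IsIndepF G s ↔ G.IsIndepSet (s : Set V) :=
  Iff.rfl

lemma alphaN_eq_indepNum {V : Type*} [Fintype V] (G : SimpleGraph V) :
    alphaN G = G.indepNum := by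
  simp only [alphaN, indepNum, isNIndepSet_iff, isIndepF_iff_isIndepSet]

lemma SimpleGraph.IsIndepSet.comap {V V' : Type*} {G : SimpleGraph V} {G' : SimpleGraph V'}
    {t : Set V'} (ht : G'.IsIndepSet t) (φ : G →g G') : G.IsIndepSet (φ ⁻¹' t) :=
  fun _ ha _ hb _ hadj ↦ ht ha hb (φ.map_adj hadj).ne (φ.map_adj hadj)

lemma SimpleGraph.IsIndepSet.card_le_indepNum_of_hom {V V' : Type*} [Finite V]
    {G : SimpleGraph V} {G' : SimpleGraph V'} {t : Set V'} (ht : G'.IsIndepSet t) (φ : G →g G')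
    {u : Finset V} (hu : ∀ a ∈ u, φ a ∈ t) : #u ≤ G.indepNum :=
  IsIndepSet.card_le_indepNum ((ht.comap φ).mono hu)

lemma Finset.card_eq_sum_card_preimage_prodMk {ι W : Type*} [Fintype ι] (U : Finset (ι × W)) :
    #U = ∑ i, #(U.preimage (Prod.mk i) (Prod.mk_right_injective i).injOn) := by
  classical
  rw [card_eq_sum_card_fiberwise (f := Prod.fst) (t := univ) fun _ _ ↦ mem_univ _]
  refine sum_congr rfl fun i _ ↦ ?_
  rw [← card_map ⟨Prod.mk i, Prod.mk_right_injective i⟩ (s := U.preimage _ _)]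
  congr 1
  ext ⟨j, w⟩
  simp only [mem_filter, mem_map, mem_preimage, Function.Embedding.coeFn_mk, Prod.mk.injEq]
  grind

namespace multiAttach

variable {V W : Type*} (G : SimpleGraph V) (H : SimpleGraph W) (hub : W) (m : ℕ) (f : Fin m → V)

def inlHom : G →g multiAttach G H hub m f where
  toFun := Sum.inl
  map_rel' := id

def copyHom (i : Fin m) : H →g multiAttach G H hub m f where
  toFun w := Sum.inr (i, w)
  map_rel' h := ⟨rfl, h⟩

lemma isIndepSet_disjSum_product {A : Finset V} {C : Finset (Fin m)} {B : Finset W}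
    (hA : G.IsIndepSet (A : Set V)) (hB : H.IsIndepSet (B : Set W)) (hub_notMem : hub ∉ B) :
    (multiAttach G H hub m f).IsIndepSet ↑(A.disjSum (C ×ˢ B)) := by
  rintro (a | ⟨i, w⟩) hx (b | ⟨j, w'⟩) hy hne hadj <;>
    simp only [mem_coe, inl_mem_disjSum, inr_mem_disjSum, mem_product] at hx hy
  · exact hA hx hy (by simpa using hne) hadj
  · exact hub_notMem (hadj.2 ▸ hy.2)
  · exact hub_notMem (hadj.2 ▸ hx.2)
  · obtain ⟨rfl, hadj⟩ := hadj
    exact hB hx.2 hy.2 (by simpa using hne) hadj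

variable [Fintype V] [Fintype W]

lemma indepNum_le : (multiAttach G H hub m f).indepNum ≤ G.indepNum + m * H.indepNum := by
  obtain ⟨T, hT⟩ := (multiAttach G H hub m f).exists_isNIndepSet_indepNum
  rw [← hT.card_eq, ← card_toLeft_add_card_toRight, card_eq_sum_card_preimage_prodMk T.toRight]
  gcongr
  · exact hT.isIndepSet.card_le_indepNum_of_hom (inlHom G H hub m f) fun _ ↦ mem_toLeft.1
  · calc _ ≤ ∑ _i : Fin m, H.indepNum := sum_le_sum fun i _ ↦
          hT.isIndepSet.card_le_indepNum_of_hom (copyHom G H hub m f i)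
            fun _ hw ↦ mem_toRight.1 (mem_preimage.1 hw)
      _ = m * H.indepNum := by simp

lemma indepNum_add_card_le {B : Finset W} (hB : H.IsIndepSet (B : Set W))
    (hub_notMem : hub ∉ B) :
    G.indepNum + m * #B ≤ (multiAttach G H hub m f).indepNum := by
  obtain ⟨A, hA⟩ := G.exists_isNIndepSet_indepNum
  have := (isIndepSet_disjSum_product G H hub m f (C := univ) hA.isIndepSet hB
    hub_notMem).card_le_indepNum
  rwa [card_disjSum, card_product, card_univ, Fintype.card_fin, hA.card_eq] at this

end multiAttach

/-- if every maximum independent set of the gadget `H` avoids its hub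
and `α(H) = s`, then attaching `m` copies of `H` to `G` (each via a single edge from
some vertex of `G` to the hub of that copy) yields `α(G') = α(G) + m * s`. -/
theorem alpha_multiAttach {V W : Type*} [Fintype V] [Fintype W]
    (G : SimpleGraph V) (H : SimpleGraph W) (hub : W) (s : ℕ) (hs : alphaN H = s)
    (hhub : ∀ t : Finset W, IsIndepF H t → hub ∈ t → t.card < s)
    (m : ℕ) (f : Fin m → V) :
    alphaN (multiAttach G H hub m f) = alphaN G + m * s := by
  simp only [alphaN_eq_indepNum] at hs ⊢
  subst hs
  obtain ⟨B, hB⟩ := H.exists_isNIndepSet_indepNum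
  have hub_notMem : hub ∉ B := fun h ↦ (hhub B hB.isIndepSet h).ne hB.card_eq
  refine (multiAttach.indepNum_le G H hub m f).antisymm ?_
  simpa only [hB.card_eq] using
    multiAttach.indepNum_add_card_le G H hub m f hB.isIndepSet hub_notMem
end
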